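/- The matrix EM is diagonalizable over ℝ; all of its eigenvalues are real; the eigenvalue 1 has algebraic multiplicity 4; every eigenvalue λ ≠ 1 of EM satisfies −1 < λ < 1; and the eigenspace {x ∈ ℝ⁹ : EM·x = x} equals span{v₁⊗v₁₂, v₁⊗v₁₃, v₁₂⊗v₁₂, v₁₃⊗v₁₃}. -/

import Mathlib

open Matrix

/-- The 9×9 real block-diagonal matrix `EM = diag(B₁, B₂, B₃)` with
`B₁ = (1/4)·[[3,1,1],[1,3,−1],[1,−1,3]]`, `B₂ = (1/4)·[[1,3,0],[3,1,0],[−1,1,0]]`,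
`B₃ = (1/4)·[[1,0,3],[−1,0,1],[3,0,1]]`. -/
noncomputable def EM : Matrix (Fin 9) (Fin 9) ℝ :=
  (1 / 4 : ℝ) •
    !![3, 1, 1, 0, 0, 0, 0, 0, 0;
       1, 3, -1, 0, 0, 0, 0, 0, 0;
       1, -1, 3, 0, 0, 0, 0, 0, 0;
       0, 0, 0, 1, 3, 0, 0, 0, 0;
       0, 0, 0, 3, 1, 0, 0, 0, 0;
       0, 0, 0, -1, 1, 0, 0, 0, 0;
       0, 0, 0, 0, 0, 0, 1, 0, 3;
       0, 0, 0, 0, 0, 0, -1, 0, 1;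
       0, 0, 0, 0, 0, 0, 3, 0, 1]

/-- The identification `ℝ³ ⊗ ℝ³ ≅ ℝ⁹` sending `e_i ⊗ e_j` to `e_{3(i−1)+j}` (0-indexed:
`e_i ⊗ e_j ↦ e_{3i+j}`): the tensor product of two vectors `u, v ∈ ℝ³` as a vector in `ℝ⁹`. -/
def tensor2 (u v : Fin 3 → ℝ) : Fin 9 → ℝ :=
  fun k => u ⟨k.val / 3, by omega⟩ * v ⟨k.val % 3, by omega⟩

def v1 : Fin 3 → ℝ := ![1, 0, 0]
def v12 : Fin 3 → ℝ := ![1, 1, 0]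
def v13 : Fin 3 → ℝ := ![1, 0, 1]

/-! `EM` has an explicit eigenbasis: the four tensors `v₁⊗v₁₂, v₁⊗v₁₃, v₁₂⊗v₁₂, v₁₃⊗v₁₃`
are fixed by `EM`, and five further vectors are eigenvectors for `1/4, -1/2, -1/2, 0, 0`; the
matrix `P` with these columns has an explicit inverse. Then `EM = P D P⁻¹` with `D` diagonal, so
the characteristic polynomial (over `ℝ` and over `ℂ`) is `∏ (X - λᵢ)`, which gives the spectrum and
the multiplicity of `1`, and the fixed space of `EM` is spanned by the columns of `P` belonging to
the eigenvalue `1`. -/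

open Polynomial
open scoped Finset

namespace Matrix

variable {n K : Type*} [Fintype n] [CommRing K]

theorem mulVec_eq_sum_smul_col (P : Matrix n n K) (y : n → K) : P *ᵥ y = ∑ i, y i • P.col i := by
  simp [mulVec_eq_sum, col_def]

variable [DecidableEq n] {A P Q : Matrix n n K} {d : n → K}

theorem col_mul_eq_mulVec_col (A P : Matrix n n K) (j : n) : (A * P).col j = A *ᵥ P.col j := by
  rw [← mulVec_single_one, ← mulVec_mulVec, mulVec_single_one]

theorem col_mul_diagonal (P : Matrix n n K) (d : n → K) (j : n) :
    (P * diagonal d).col j = d j • P.col j := by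
  ext i
  simp [mul_diagonal, mul_comm]

theorem mul_eq_mul_diagonal_iff :
    A * P = P * diagonal d ↔ ∀ j, A *ᵥ P.col j = d j • P.col j := by
  simp only [← col_mul_eq_mulVec_col, ← col_mul_diagonal]
  exact ⟨fun h j => by rw [h], ext_col⟩

theorem eq_mul_diagonal_mul_of_mul_eq_one (hPQ : P * Q = 1) (hAP : A * P = P * diagonal d) :
    A = P * diagonal d * Q := by
  rw [← hAP, Matrix.mul_assoc, hPQ, Matrix.mul_one]

theorem charpoly_eq_prod_of_mul_eq_mul_diagonal (hPQ : P * Q = 1)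
    (hAP : A * P = P * diagonal d) : A.charpoly = ∏ i, (X - C (d i)) := by
  let U : (Matrix n n K)ˣ := ⟨P, Q, hPQ, mul_eq_one_comm.mp hPQ⟩
  have hA : A = U * diagonal d * (U : Matrix n n K)⁻¹ := by
    rw [inv_eq_right_inv hPQ]
    exact eq_mul_diagonal_mul_of_mul_eq_one hPQ hAP
  rw [hA, charpoly_units_conj, charpoly_diagonal]

theorem eigenspace_eq_span_of_mul_eq_mul_diagonal [IsDomain K] (hPQ : P * Q = 1)
    (hAP : A * P = P * diagonal d) (μ : K) :
    Module.End.eigenspace (toLin' A) μ = Submodule.span K (P.col '' {j | d j = μ}) := by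
  apply le_antisymm
  · intro x hx
    rw [Module.End.mem_eigenspace_iff, toLin'_apply] at hx
    set y := Q *ᵥ x
    have hQAP : Q * A * P = diagonal d := by
      rw [Matrix.mul_assoc, hAP, ← Matrix.mul_assoc, mul_eq_one_comm.mp hPQ, Matrix.one_mul]
    have hy : diagonal d *ᵥ y = μ • y := calc
      diagonal d *ᵥ y = Q *ᵥ A *ᵥ (P * Q) *ᵥ x := by
        simp only [← hQAP, y, mulVec_mulVec, Matrix.mul_assoc]
      _ = μ • y := by rw [hPQ, one_mulVec, hx, mulVec_smul]
    have hx' : x = ∑ i, y i • P.col i := by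
      rw [← mulVec_eq_sum_smul_col, mulVec_mulVec, hPQ, one_mulVec]
    rw [hx']
    refine Submodule.sum_mem _ fun i _ => ?_
    by_cases hi : d i = μ
    · exact Submodule.smul_mem _ _ (Submodule.subset_span ⟨i, hi, rfl⟩)
    · have hyi : (d i - μ) * y i = 0 := by
        have := congrFun hy i
        simp only [mulVec_diagonal, Pi.smul_apply, smul_eq_mul] at this
        linear_combination this
      simp [(mul_eq_zero.mp hyi).resolve_left (sub_ne_zero.mpr hi)]
  · rw [Submodule.span_le]
    rintro _ ⟨j, hj, rfl⟩
    rw [SetLike.mem_coe, Module.End.mem_eigenspace_iff, toLin'_apply, ← hj]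
    exact mul_eq_mul_diagonal_iff.mp hAP j

end Matrix

namespace Polynomial

theorem rootMultiplicity_prod_X_sub_C {R ι : Type*} [CommRing R] [IsDomain R]
    [DecidableEq R] (s : Finset ι) (d : ι → R) (a : R) :
    (∏ i ∈ s, (X - C (d i))).rootMultiplicity a = #{i ∈ s | d i = a} := by
  have h : (s.val.map fun i => X - C (d i)) = (s.val.map d).map fun b => X - C b := by
    rw [Multiset.map_map]; rfl
  rw [← count_roots, Finset.prod_eq_multiset_prod, h, roots_multiset_prod_X_sub_C,
    Multiset.count_map]
  simp_rw [eq_comm (a := a)]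
  rfl

theorem isRoot_prod_X_sub_C_iff {R ι : Type*} [CommRing R] [IsDomain R]
    (s : Finset ι) (d : ι → R) (x : R) :
    (∏ i ∈ s, (X - C (d i))).IsRoot x ↔ ∃ i ∈ s, d i = x := by
  simp only [isRoot_prod, root_X_sub_C]

end Polynomial

noncomputable def emEigenvalue : Fin 9 → ℝ := ![1, 1, 1, 1, 1/4, -1/2, -1/2, 0, 0]

def emEigenvector : Fin 9 → Fin 9 → ℝ :=
  ![tensor2 v1 v12, tensor2 v1 v13, tensor2 v12 v12, tensor2 v13 v13,
    ![1, -1, -1, 0, 0, 0, 0, 0, 0],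
    ![0, 0, 0, 1, -1, 1, 0, 0, 0],
    ![0, 0, 0, 0, 0, 0, 1, 1, -1],
    ![0, 0, 0, 0, 0, 1, 0, 0, 0],
    ![0, 0, 0, 0, 0, 0, 0, 1, 0]]

def emEigenbasis : Matrix (Fin 9) (Fin 9) ℝ := (of emEigenvector)ᵀ

noncomputable def emEigenbasisInv : Matrix (Fin 9) (Fin 9) ℝ :=
  !![1/3, 2/3, -1/3, -1/2, -1/2, 0, 0, 0, 0;
     1/3, -1/3, 2/3, 0, 0, 0, -1/2, 0, -1/2;
     0, 0, 0, 1/2, 1/2, 0, 0, 0, 0;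
     0, 0, 0, 0, 0, 0, 1/2, 0, 1/2;
     1/3, -1/3, -1/3, 0, 0, 0, 0, 0, 0;
     0, 0, 0, 1/2, -1/2, 0, 0, 0, 0;
     0, 0, 0, 0, 0, 0, 1/2, 0, -1/2;
     0, 0, 0, -1/2, 1/2, 1, 0, 0, 0;
     0, 0, 0, 0, 0, 0, -1/2, 1, 1/2]

theorem tensor2_eq (u v : Fin 3 → ℝ) :
    tensor2 u v = ![u 0 * v 0, u 0 * v 1, u 0 * v 2, u 1 * v 0, u 1 * v 1, u 1 * v 2,
      u 2 * v 0, u 2 * v 1, u 2 * v 2] := by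
  ext k
  fin_cases k <;> rfl

set_option maxHeartbeats 1000000 in
theorem EM_mulVec_emEigenvector (j : Fin 9) :
    EM *ᵥ emEigenvector j = emEigenvalue j • emEigenvector j := by
  fin_cases j <;> simp only [emEigenvector, emEigenvalue, tensor2_eq, v1, v12, v13, cons_val] <;>
    ext i <;> fin_cases i <;> norm_num [EM, mulVec, dotProduct, Fin.sum_univ_succ]

theorem emEigenbasis_mul_emEigenbasisInv : emEigenbasis * emEigenbasisInv = 1 := by
  simp only [emEigenbasis, emEigenvector, tensor2_eq, v1, v12, v13, cons_val]
  ext i j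
  fin_cases i <;> fin_cases j <;>
    norm_num [emEigenbasisInv, mul_apply, Fin.sum_univ_succ, one_apply]

theorem emEigenvalue_eq_one_iff (j : Fin 9) :
    emEigenvalue j = 1 ↔ j ∈ ({0, 1, 2, 3} : Finset (Fin 9)) := by
  fin_cases j <;> norm_num [emEigenvalue, Fin.ext_iff]

theorem emEigenvalue_mem_Ioo_of_ne_one (j : Fin 9) (hj : emEigenvalue j ≠ 1) :
    emEigenvalue j ∈ Set.Ioo (-1) 1 := by
  revert hj
  fin_cases j <;> norm_num [emEigenvalue]

theorem EM_mul_emEigenbasis : EM * emEigenbasis = emEigenbasis * diagonal emEigenvalue :=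
  mul_eq_mul_diagonal_iff.mpr EM_mulVec_emEigenvector

theorem charpoly_EM : EM.charpoly = ∏ i, (X - C (emEigenvalue i)) :=
  charpoly_eq_prod_of_mul_eq_mul_diagonal emEigenbasis_mul_emEigenbasisInv EM_mul_emEigenbasis

theorem rootMultiplicity_one_charpoly_EM : EM.charpoly.rootMultiplicity 1 = 4 := by
  rw [charpoly_EM, rootMultiplicity_prod_X_sub_C]
  simp only [emEigenvalue_eq_one_iff, Finset.filter_mem_eq_inter, Finset.univ_inter]
  rfl

theorem charpoly_map_ofReal_EM :
    (EM.map Complex.ofReal).charpoly = ∏ i, (X - C (emEigenvalue i : ℂ)) := by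
  rw [show EM.map Complex.ofReal = EM.map Complex.ofRealHom from rfl, charpoly_map, charpoly_EM,
    Polynomial.map_prod]
  simp

theorem exists_emEigenvalue_of_isRoot {μ : ℂ} (h : (EM.map Complex.ofReal).charpoly.IsRoot μ) :
    ∃ j, (emEigenvalue j : ℂ) = μ := by
  rw [charpoly_map_ofReal_EM, isRoot_prod_X_sub_C_iff] at h
  simpa using h

theorem setOf_EM_mulVec_eq_self :
    {x : Fin 9 → ℝ | EM *ᵥ x = x} =
      ↑(Submodule.span ℝ (emEigenvector '' {j | emEigenvalue j = 1})) := by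
  rw [← of_col emEigenvector, ← emEigenbasis,
    ← eigenspace_eq_span_of_mul_eq_mul_diagonal emEigenbasis_mul_emEigenbasisInv
      EM_mul_emEigenbasis]
  ext x
  simp

theorem emEigenvector_image_eigenvalue_one :
    emEigenvector '' {j | emEigenvalue j = 1} =
      {tensor2 v1 v12, tensor2 v1 v13, tensor2 v12 v12, tensor2 v13 v13} := by
  simp only [emEigenvalue_eq_one_iff, Finset.mem_insert, Finset.mem_singleton, Set.ofPred_or,
    Set.ofPred_eq_eq_singleton, Set.singleton_union, Set.image_insert_eq, Set.image_singleton]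
  rfl

/-- `EM` is diagonalizable over `ℝ`; all its eigenvalues are real; the eigenvalue
`1` has algebraic multiplicity `4`; every eigenvalue `λ ≠ 1` satisfies `−1 < λ < 1`; and the
eigenspace `{x : EM·x = x}` equals `span{v₁⊗v₁₂, v₁⊗v₁₃, v₁₂⊗v₁₂, v₁₃⊗v₁₃}`. -/
theorem stmt11 :
    (∃ P D : Matrix (Fin 9) (Fin 9) ℝ, IsUnit P ∧ D.IsDiag ∧ EM = P * D * P⁻¹) ∧
    (∀ μ : ℂ, ((EM.map (Complex.ofReal)).charpoly).IsRoot μ → μ.im = 0) ∧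
    (EM.charpoly.rootMultiplicity 1 = 4) ∧
    (∀ μ : ℂ, ((EM.map (Complex.ofReal)).charpoly).IsRoot μ → μ ≠ 1 →
      -1 < μ.re ∧ μ.re < 1) ∧
    ({x : Fin 9 → ℝ | EM.mulVec x = x} =
      ↑(Submodule.span ℝ
        {tensor2 v1 v12, tensor2 v1 v13, tensor2 v12 v12, tensor2 v13 v13})) := by
  have hPQ := emEigenbasis_mul_emEigenbasisInv
  refine ⟨⟨emEigenbasis, diagonal emEigenvalue, IsUnit.of_mul_eq_one _ hPQ, isDiag_diagonal _,
    ?_⟩, ?_, rootMultiplicity_one_charpoly_EM, ?_, ?_⟩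
  · rw [inv_eq_right_inv hPQ]
    exact eq_mul_diagonal_mul_of_mul_eq_one hPQ EM_mul_emEigenbasis
  · rintro μ hμ
    obtain ⟨j, rfl⟩ := exists_emEigenvalue_of_isRoot hμ
    exact Complex.ofReal_im _
  · rintro μ hμ hne
    obtain ⟨j, rfl⟩ := exists_emEigenvalue_of_isRoot hμ
    exact emEigenvalue_mem_Ioo_of_ne_one j (by exact_mod_cast hne)
  · rw [setOf_EM_mulVec_eq_self, emEigenvector_image_eigenvalue_one]
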